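/- Let P and Q be bounded projectors on a Banach space with P - Q compact. Then [P - Q] = [(I - Q) - (I - P)], where [·] denotes the relative dimension. -/

import Mathlib

open Module

/-- A bounded operator between Banach spaces is Fredholm if its range is closed and its
kernel and cokernel are finite-dimensional. -/
def IsFredholm {E F : Type*} [NormedAddCommGroup E] [NormedSpace ℂ E]
    [NormedAddCommGroup F] [NormedSpace ℂ F] (T : E →L[ℂ] F) : Prop :=
  IsClosed (LinearMap.range (T : E →ₗ[ℂ] F) : Set F) ∧ FiniteDimensional ℂ (LinearMap.ker (T : E →ₗ[ℂ] F)) ∧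
    FiniteDimensional ℂ (F ⧸ LinearMap.range (T : E →ₗ[ℂ] F))

/-- The Fredholm index of a bounded operator. -/
noncomputable def fredIndex {E F : Type*} [NormedAddCommGroup E] [NormedSpace ℂ E]
    [NormedAddCommGroup F] [NormedSpace ℂ F] (T : E →L[ℂ] F) : ℤ :=
  (finrank ℂ (LinearMap.ker (T : E →ₗ[ℂ] F)) : ℤ) - finrank ℂ (F ⧸ LinearMap.range (T : E →ₗ[ℂ] F))

/-- The restriction of `Q` to an operator `range P → range Q`. -/
noncomputable def projRestrict {E : Type*} [NormedAddCommGroup E] [NormedSpace ℂ E]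
    (P Q : E →L[ℂ] E) : ↥(LinearMap.range (P : E →ₗ[ℂ] E)) →L[ℂ] ↥(LinearMap.range (Q : E →ₗ[ℂ] E)) :=
  (Q.comp (LinearMap.range (P : E →ₗ[ℂ] E)).subtypeL).codRestrict (LinearMap.range (Q : E →ₗ[ℂ] E))
    (fun _ => LinearMap.mem_range_self (Q : E →ₗ[ℂ] E) _)

/-- The relative dimension `[P - Q]`: the Fredholm index of the restriction of `Q` to an
operator `range P → range Q`. -/
noncomputable def relDim {E : Type*} [NormedAddCommGroup E] [NormedSpace ℂ E]
    (P Q : E →L[ℂ] E) : ℤ :=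
  fredIndex (projRestrict P Q)

/-!
The kernel of `Q : range P → range Q` is `range P ∩ ker Q`, and, `Q` being a projection with
kernel `ker Q`, its cokernel is `E ⧸ (range P + ker Q)`. Passing to complements swaps the
roles of ranges and kernels, so the restriction of `I - P` to `range (I - Q) = ker Q` has kernel
`ker Q ∩ range P` and cokernel `E ⧸ (ker Q + range P)`: the two indices agree term by term.
-/

open LinearMap

theorem LinearMap.IsIdempotentElem.mem_sup_ker_iff_mem_map {R M : Type*} [Ring R]
    [AddCommGroup M] [Module R M] {Q : M →ₗ[R] M} (hQ : IsIdempotentElem Q)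
    (V : Submodule R M) {x : M} (hx : x ∈ range Q) : x ∈ V ⊔ ker Q ↔ x ∈ V.map Q := by
  rw [hQ.mem_range_iff] at hx
  constructor
  · intro h
    obtain ⟨v, hv, k, hk, rfl⟩ := Submodule.mem_sup.mp h
    refine ⟨v, hv, ?_⟩
    rw [← hx, map_add, mem_ker.mp hk, add_zero]
  · rintro ⟨v, hv, rfl⟩
    have hvk : Q v - v ∈ ker Q := by simp [mem_ker, hx]
    simpa using Submodule.add_mem_sup hv hvk

section projRestrict

variable {E : Type*} [NormedAddCommGroup E] [NormedSpace ℂ E]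

noncomputable def kerProjRestrictEquiv (P Q : E →L[ℂ] E) :
    ker (projRestrict P Q : range (P : E →ₗ[ℂ] E) →ₗ[ℂ] range (Q : E →ₗ[ℂ] E)) ≃ₗ[ℂ]
      ↥(range (P : E →ₗ[ℂ] E) ⊓ ker (Q : E →ₗ[ℂ] E)) where
  toFun x := ⟨x.1.1, x.1.2, Subtype.ext_iff.mp x.2⟩
  invFun y := ⟨⟨y.1, y.2.1⟩, Subtype.ext y.2.2⟩
  map_add' _ _ := rfl
  map_smul' _ _ := rfl
  left_inv _ := rfl
  right_inv _ := rfl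

theorem range_projRestrict (P Q : E →L[ℂ] E) :
    range (projRestrict P Q : range (P : E →ₗ[ℂ] E) →ₗ[ℂ] range (Q : E →ₗ[ℂ] E)) =
      ((range (P : E →ₗ[ℂ] E)).map (Q : E →ₗ[ℂ] E)).comap (range (Q : E →ₗ[ℂ] E)).subtype := by
  ext x
  constructor
  · rintro ⟨⟨p, hp⟩, rfl⟩
    exact ⟨p, hp, rfl⟩
  · rintro ⟨p, hp, hpx⟩
    exact ⟨⟨p, hp⟩, Subtype.ext hpx⟩

noncomputable def cokerProjRestrictEquiv (P : E →L[ℂ] E) {Q : E →L[ℂ] E}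
    (hQ : IsIdempotentElem Q) :
    (range (Q : E →ₗ[ℂ] E) ⧸
        range (projRestrict P Q : range (P : E →ₗ[ℂ] E) →ₗ[ℂ] range (Q : E →ₗ[ℂ] E))) ≃ₗ[ℂ]
      E ⧸ (range (P : E →ₗ[ℂ] E) ⊔ ker (Q : E →ₗ[ℂ] E)) :=
  have hQ' := ContinuousLinearMap.IsIdempotentElem.toLinearMap hQ
  let N := range (P : E →ₗ[ℂ] E) ⊔ ker (Q : E →ₗ[ℂ] E)
  let φ := N.mkQ ∘ₗ (range (Q : E →ₗ[ℂ] E)).subtype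
  have hφ : Function.Surjective φ := by
    intro z
    obtain ⟨x, rfl⟩ := N.mkQ_surjective z
    refine ⟨⟨Q x, mem_range_self (Q : E →ₗ[ℂ] E) x⟩, ?_⟩
    show N.mkQ (Q x) = N.mkQ x
    rw [Submodule.mkQ_apply, Submodule.mkQ_apply, Submodule.Quotient.eq]
    have hQx : Q (Q x) = Q x := DFunLike.congr_fun hQ.eq x
    exact Submodule.mem_sup_right (by simp [mem_ker, hQx])
  have hker : range (projRestrict P Q : range (P : E →ₗ[ℂ] E) →ₗ[ℂ] range (Q : E →ₗ[ℂ] E)) =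
      ker φ := by
    ext x
    rw [range_projRestrict, Submodule.mem_comap, mem_ker, comp_apply, Submodule.mkQ_apply,
      Submodule.Quotient.mk_eq_zero]
    exact (hQ'.mem_sup_ker_iff_mem_map _ x.2).symm
  (Submodule.quotEquivOfEq _ _ hker).trans (φ.quotKerEquivOfSurjective hφ)

theorem relDim_eq_finrank_inf_sub_finrank_quotient_sup (P : E →L[ℂ] E) {Q : E →L[ℂ] E}
    (hQ : IsIdempotentElem Q) :
    relDim P Q = (Module.finrank ℂ ↥(range (P : E →ₗ[ℂ] E) ⊓ ker (Q : E →ₗ[ℂ] E)) : ℤ) -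
      Module.finrank ℂ (E ⧸ (range (P : E →ₗ[ℂ] E) ⊔ ker (Q : E →ₗ[ℂ] E))) := by
  rw [relDim, fredIndex, (kerProjRestrictEquiv P Q).finrank_eq,
    (cokerProjRestrictEquiv P hQ).finrank_eq]

end projRestrict

theorem relDim_complement_general
    {E : Type*} [NormedAddCommGroup E] [NormedSpace ℂ E]
    (P Q : E →L[ℂ] E) (hP : P * P = P) (hQ : Q * Q = Q) :
    relDim P Q = relDim (1 - Q) (1 - P) := by
  have hP' : IsIdempotentElem P := hP
  have hQ' : IsIdempotentElem Q := hQ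
  have h_range : range ((1 - Q : E →L[ℂ] E) : E →ₗ[ℂ] E) = ker (Q : E →ₗ[ℂ] E) := by
    rw [ContinuousLinearMap.toLinearMap_sub, ContinuousLinearMap.toLinearMap_one,
      (ContinuousLinearMap.IsIdempotentElem.toLinearMap hQ').ker_eq_range_one_sub]
  have h_ker : ker ((1 - P : E →L[ℂ] E) : E →ₗ[ℂ] E) = range (P : E →ₗ[ℂ] E) := by
    rw [ContinuousLinearMap.toLinearMap_sub, ContinuousLinearMap.toLinearMap_one,
      (ContinuousLinearMap.IsIdempotentElem.toLinearMap hP').range_eq_ker_one_sub]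
  rw [relDim_eq_finrank_inf_sub_finrank_quotient_sup P hQ',
    relDim_eq_finrank_inf_sub_finrank_quotient_sup _ hP'.one_sub, h_range, h_ker, inf_comm,
    sup_comm]

/-- For projectors with compact difference, `[P - Q] = [(I - Q) - (I - P)]`. -/
theorem relDim_complement
    {E : Type*} [NormedAddCommGroup E] [NormedSpace ℂ E] [CompleteSpace E]
    (P Q : E →L[ℂ] E) (hP : P * P = P) (hQ : Q * Q = Q)
    (hPQ : IsCompactOperator ⇑(P - Q)) :
    relDim P Q = relDim (1 - Q) (1 - P) :=
  relDim_complement_general P Q hP hQ
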